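/- Under the same hypotheses (p ∈ (4,6), |u⁺|_{p,ε} ≤ S‖u‖_{1,ε}, φ(u)-term nonnegative), the infimum m_ε of J_ε over the Nehari manifold N_ε satisfies m_ε ≥ (¼ − 1/p)·S^{−2p/(p−2)} > 0, a bound independent of ε. -/
import Mathlib


/-- Uniform positive lower bound for `m_ε = inf_{N_ε} J_ε`:
on the Nehari manifold, `J_ε(u) ≥ (¼ − 1/p)·S^{−2p/(p−2)} > 0`.
`Nrm u` stands for `‖u‖_{1,ε}`, `Lp u` for `|u⁺|_{p,ε}`, and `Phi u` for
`(1/ε³)∫_M φ(u)u² dμ_g`. -/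
theorem m_eps_lower_bound {X : Type*} (p S : ℝ) (hp : 4 < p) (hp' : p < 6)
    (hS : 0 < S) (Nrm Lp Phi : X → ℝ)
    (hNrm : ∀ u, 0 ≤ Nrm u) (hLp : ∀ u, 0 ≤ Lp u)
    (hSob : ∀ u, Lp u ≤ S * Nrm u) (hPhi : ∀ u, 0 ≤ Phi u) :
    0 < (1 / 4 - 1 / p) * S ^ (-(2 * p / (p - 2)))
    ∧ ∀ u : X, Nrm u ≠ 0 → (Nrm u) ^ 2 + Phi u = (Lp u) ^ p →
        (1 / 4 - 1 / p) * S ^ (-(2 * p / (p - 2)))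
          ≤ (1 / 2) * (Nrm u) ^ 2 + (1 / 4) * Phi u - (1 / p) * (Lp u) ^ p := by
  have hp0 : (0:ℝ) < p := by linarith
  have hp2 : (0:ℝ) < p - 2 := by linarith
  have hpos : (0:ℝ) < 1 / 4 - 1 / p := by
    have h4 : 1 / p < 1 / 4 := by
      rw [div_lt_div_iff₀ hp0 (by norm_num)]; linarith
    linarith
  have hSpow : 0 < S ^ (-(2 * p / (p - 2))) := Real.rpow_pos_of_pos hS _
  refine ⟨mul_pos hpos hSpow, ?_⟩
  intro u hN0 hNeh
  set N := Nrm u with hNdef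
  set L := Lp u with hLdef
  set P := Phi u with hPdef
  have hN : 0 < N := lt_of_le_of_ne (hNrm u) (Ne.symm hN0)
  have hP : 0 ≤ P := hPhi u
  have hL : 0 ≤ L := hLp u
  have hNp : 0 < N ^ p := Real.rpow_pos_of_pos hN p
  have h2 : L ^ p ≤ S ^ p * N ^ p := by
    calc L ^ p ≤ (S * N) ^ p := Real.rpow_le_rpow hL (hSob u) hp0.le
      _ = S ^ p * N ^ p := Real.mul_rpow hS.le hN.le
  have h2' : N ^ (2:ℝ) ≤ S ^ p * N ^ p := by
    rw [show ((2:ℝ)) = ((2:ℕ):ℝ) by norm_num, Real.rpow_natCast]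
    nlinarith [hNeh, hP]
  have h3 : N ^ ((2:ℝ) - p) ≤ S ^ p := by
    rw [Real.rpow_sub hN, div_le_iff₀ hNp]
    exact h2'
  have hq : (0:ℝ) < 2 / (p - 2) := by positivity
  have h4 : (N ^ ((2:ℝ) - p)) ^ (2 / (p - 2)) ≤ (S ^ p) ^ (2 / (p - 2)) :=
    Real.rpow_le_rpow (Real.rpow_nonneg hN.le _) h3 hq.le
  rw [← Real.rpow_mul hN.le, ← Real.rpow_mul hS.le,
    show ((2:ℝ) - p) * (2 / (p - 2)) = -2 by field_simp; ring,
    show p * (2 / (p - 2)) = 2 * p / (p - 2) by ring] at h4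
  have hN2 : (0:ℝ) < N ^ 2 := by positivity
  have hinv : (N ^ 2)⁻¹ ≤ S ^ (2 * p / (p - 2)) := by
    have he : N ^ ((-2):ℝ) = (N ^ 2)⁻¹ := by
      rw [Real.rpow_neg hN.le, show ((2:ℝ)) = ((2:ℕ):ℝ) by norm_num,
        Real.rpow_natCast]
    rw [← he]
    exact h4
  have hkey : S ^ (-(2 * p / (p - 2))) ≤ N ^ 2 := by
    rw [Real.rpow_neg hS.le]
    calc (S ^ (2 * p / (p - 2)))⁻¹ ≤ ((N ^ 2)⁻¹)⁻¹ :=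
          inv_anti₀ (by positivity) hinv
      _ = N ^ 2 := inv_inv _
  calc (1 / 4 - 1 / p) * S ^ (-(2 * p / (p - 2)))
      ≤ (1 / 4 - 1 / p) * N ^ 2 := by
        exact mul_le_mul_of_nonneg_left hkey hpos.le
    _ ≤ 1 / 2 * N ^ 2 + 1 / 4 * P - 1 / p * L ^ p := by
        rw [← hNeh]; nlinarith [hpos, hP, sq_nonneg N]
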